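/- Suppose Φ satisfies Assumption (A1) and γ² > 4 max_k Φ̂(k), and set δ₀ := ω₀²/γ. Then there exist constants c₂, γ₂ > 0 such that the Fourier coefficients Ã^i_{t,x} := ∫₀¹ dk e^{i2πx·k} Â^i_t(k) satisfy |Ã^i_{t,x}| ≤ c₂ e^{−δ₀ t/2 − γ₂ |x|} for i = 1,2, all t ≥ 0 and all x ∈ ℤ. -/

import Mathlib

open Real MeasureTheory Matrix
open scoped BigOperators

noncomputable section

/-- Centered representative of an element of the cyclic lattice `Λ_L`. -/
def zrep (L : ℕ) (x : ZMod L) : ℤ :=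
  if (x.val : ℤ) ≤ (L : ℤ) / 2 then (x.val : ℤ) else (x.val : ℤ) - (L : ℤ)

/-- Fourier transform of the (symmetric, real) interaction `Φ`. -/
def phiHat (Φ : ℤ → ℝ) (k : ℝ) : ℝ := ∑' x : ℤ, Φ x * Real.cos (2 * π * k * (x : ℝ))

/-- Assumption (A1): exponential decay, symmetry, and pinning with constant `ω₀`. -/
def AssumptionA1 (Φ : ℤ → ℝ) (ω₀ : ℝ) : Prop :=
  (∃ C > (0:ℝ), ∃ δ > (0:ℝ), ∀ x : ℤ, |Φ x| ≤ C * Real.exp (-δ * |(x : ℝ)|)) ∧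
  (∀ x : ℤ, Φ (-x) = Φ x) ∧ 0 < ω₀ ∧ ∀ k : ℝ, ω₀ ^ 2 ≤ phiHat Φ k

/-- `max_k Φ̂(k)`. -/
def supPhiHat (Φ : ℤ → ℝ) : ℝ := ⨆ k : ℝ, phiHat Φ k

def uFun (Φ : ℤ → ℝ) (γ k : ℝ) : ℝ := Real.sqrt ((γ / 2) ^ 2 - phiHat Φ k)
def muP (Φ : ℤ → ℝ) (γ k : ℝ) : ℝ := γ / 2 + uFun Φ γ k
def muM (Φ : ℤ → ℝ) (γ k : ℝ) : ℝ := γ / 2 - uFun Φ γ k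

/-- `Â¹_t(k)`. -/
def Ahat1 (Φ : ℤ → ℝ) (γ t k : ℝ) : ℝ :=
  phiHat Φ k * (Real.exp (-(t * muP Φ γ k)) - Real.exp (-(t * muM Φ γ k))) / (2 * uFun Φ γ k)

/-- `Â²_t(k)`. -/
def Ahat2 (Φ : ℤ → ℝ) (γ t k : ℝ) : ℝ :=
  (muP Φ γ k * Real.exp (-(t * muP Φ γ k)) - muM Φ γ k * Real.exp (-(t * muM Φ γ k)))
    / (2 * uFun Φ γ k)

/-- Noise domination: `γ² > 4 max_k Φ̂(k)`. -/
def NoiseDom (Φ : ℤ → ℝ) (γ : ℝ) : Prop := 4 * supPhiHat Φ < γ ^ 2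

/-- Nondegeneracy of the harmonic forces. -/
def NonDeg (Φ : ℤ → ℝ) (γ : ℝ) : Prop :=
  ∀ ε > (0:ℝ), ∃ Cε > (0:ℝ), ∀ k₀ : ℝ, ε ≤ |k₀| → |k₀| ≤ 1 / 2 →
    Cε ≤ ∫ t in Set.Ioi (0 : ℝ),
        ∫ k in (0:ℝ)..1, (Ahat2 Φ γ t (k + k₀ / 2) - Ahat2 Φ γ t (k - k₀ / 2)) ^ 2

/-- Assumption (A2). -/
def AssumptionA2 (Φ : ℤ → ℝ) (γ : ℝ) : Prop := NoiseDom Φ γ ∧ NonDeg Φ γ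

/-- A dual lattice point `k ∈ Λ_L* ⊂ (-1/2,1/2]`, as a real number. -/
def dualPt (L : ℕ) (κ : ZMod L) : ℝ := (zrep L κ : ℝ) / (L : ℝ)

/-- `A²_{t,x} = ∫_{Λ_L*} dk e^{i2πk·x} Â²_t(k)` (real, by symmetry of `Â²`). -/
def latA2 (Φ : ℤ → ℝ) (γ : ℝ) (L : ℕ) [NeZero L] (t : ℝ) (x : ZMod L) : ℝ :=
  (L : ℝ)⁻¹ * ∑ κ : ZMod L,
    Real.cos (2 * π * dualPt L κ * (zrep L x : ℝ)) * Ahat2 Φ γ t (dualPt L κ)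

/-- The memory kernel `p_{t,x} := 2γ (A²_{t,x})²`. -/
def pKer (Φ : ℤ → ℝ) (γ : ℝ) (L : ℕ) [NeZero L] (t : ℝ) (x : ZMod L) : ℝ :=
  2 * γ * (latA2 Φ γ L t x) ^ 2

/-- The periodized interaction matrix `Φ_L`. -/
def PhiL (Φ : ℤ → ℝ) (L : ℕ) : Matrix (ZMod L) (ZMod L) ℝ :=
  fun x' x => ∑' n : ℤ, Φ (zrep L (x' - x) + n * (L : ℤ))

/-- `M_γ = [[0, Φ_L],[−1, γ·1]]` in block form. -/
def Mgam (Φ : ℤ → ℝ) (γ : ℝ) (L : ℕ) :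
    Matrix (Fin 2 × ZMod L) (Fin 2 × ZMod L) ℝ :=
  fun p q =>
    if p.1 = 0 then (if q.1 = 0 then 0 else PhiL Φ L p.2 q.2)
    else (if q.1 = 0 then -(if p.2 = q.2 then 1 else 0)
          else γ * (if p.2 = q.2 then 1 else 0))

/-- `𝒢_L = diag(Φ_L, 1)`. -/
def GLmat (Φ : ℤ → ℝ) (L : ℕ) :
    Matrix (Fin 2 × ZMod L) (Fin 2 × ZMod L) ℝ :=
  fun p q =>
    if p.1 = 0 then (if q.1 = 0 then PhiL Φ L p.2 q.2 else 0)
    else (if q.1 = 0 then 0 else (if p.2 = q.2 then 1 else 0))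

/-- The translate `Γ_x` of the initial second-moment matrix. -/
def transMat (L : ℕ) (Γ : Matrix (Fin 2 × ZMod L) (Fin 2 × ZMod L) ℝ) (x : ZMod L) :
    Matrix (Fin 2 × ZMod L) (Fin 2 × ZMod L) ℝ :=
  fun p q => Γ (p.1, x + p.2) (q.1, x + q.2)

/-- The source term `g_{t,x} = (e^{−tM_γᵀ} Γ_x e^{−tM_γ})^{22}_{0,0}`. -/
def gSrc (Φ : ℤ → ℝ) (γ : ℝ) (L : ℕ) [NeZero L]
    (Γ : Matrix (Fin 2 × ZMod L) (Fin 2 × ZMod L) ℝ) (t : ℝ) (x : ZMod L) : ℝ :=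
  (NormedSpace.exp ((-t) • (Mgam Φ γ L)ᵀ) * transMat L Γ x *
    NormedSpace.exp ((-t) • Mgam Φ γ L)) (1, 0) (1, 0)

/-- Mean energy density `𝓔 = (2L)⁻¹ Tr(𝒢_L Γ)`. -/
def EDen (Φ : ℤ → ℝ) (L : ℕ) [NeZero L]
    (Γ : Matrix (Fin 2 × ZMod L) (Fin 2 × ZMod L) ℝ) : ℝ :=
  (2 * (L : ℝ))⁻¹ * Matrix.trace (GLmat Φ L * Γ)

/-- `T` is a continuous solution of the renewal equation (extended by `0` to `t<0`). -/
def IsTempSol (Φ : ℤ → ℝ) (γ : ℝ) (L : ℕ) [NeZero L]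
    (Γ : Matrix (Fin 2 × ZMod L) (Fin 2 × ZMod L) ℝ) (T : ℝ → ZMod L → ℝ) : Prop :=
  (∀ x, ContinuousOn (fun t => T t x) (Set.Ici 0)) ∧
  (∀ t < (0:ℝ), ∀ x, T t x = 0) ∧
  ∀ t ≥ (0:ℝ), ∀ x : ZMod L, T t x = gSrc Φ γ L Γ t x +
    ∫ s in (0:ℝ)..t, ∑ y : ZMod L, pKer Φ γ L s y * T (t - s) (x - y)

/-- `p̃_x := (γ/2)∫₀^∞ p_{s,x} ds`. -/
def ptil (Φ : ℤ → ℝ) (γ : ℝ) (L : ℕ) [NeZero L] (x : ZMod L) : ℝ :=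
  γ / 2 * ∫ s in Set.Ioi (0:ℝ), pKer Φ γ L s x

/-- The lattice diffusion operator `D`, as a matrix. -/
def Dmat (Φ : ℤ → ℝ) (γ : ℝ) (L : ℕ) [NeZero L] : Matrix (ZMod L) (ZMod L) ℝ :=
  fun x z => ∑ y : ZMod L, ptil Φ γ L y *
    ((if z = x then 2 else 0) - (if z = x + y then 1 else 0) - (if z = x - y then 1 else 0))

/-- `κ_L := Σ_y y² p̃_y`. -/
def kappaL (Φ : ℤ → ℝ) (γ : ℝ) (L : ℕ) [NeZero L] : ℝ :=
  ∑ y : ZMod L, (zrep L y : ℝ) ^ 2 * ptil Φ γ L y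

/-!
As a function of `g = Φ̂(k) = ω(k)²`, each `Â^i_t` is holomorphic wherever `(γ/2)² - g` lies in
the right half-plane, and it is `O(e^{-a t})` uniformly on compact sets on which both roots
`μ_± = γ/2 ± √((γ/2)² - g)` have real part `> a`. On the real axis `ω₀² ≤ g < (γ/2)²`, so
`μ₋ ≥ g/γ ≥ δ₀` because `μ₊ μ₋ = g` and `μ₊ ≤ γ`; we take `a = δ₀/2`. Exponential decay of `Φ`
makes `Φ̂` holomorphic and `1`-periodic on a strip, so a thin rectangle `[0,1] × [-c,c]` is mapped
into that region. Moving the Fourier integral over `[0,1]` to the line `Im k = ±c` (periodicity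
cancels the vertical sides) gives the factor `e^{-2πc|x|}`.
-/

lemma Complex.norm_cos_le_exp_abs_im (z : ℂ) : ‖Complex.cos z‖ ≤ Real.exp |z.im| := by
  have h : ∀ w : ℂ, |w.im| = |z.im| → ‖Complex.exp (w * Complex.I)‖ ≤ Real.exp |z.im| :=
    fun w hw => by simpa [Complex.norm_exp, ← hw] using neg_le_abs w.im
  rw [Complex.cos, norm_div, Complex.norm_two]
  have := norm_add_le (Complex.exp (z * Complex.I)) (Complex.exp (-z * Complex.I))
  linarith [h z rfl, h (-z) (by simp)]

lemma summable_exp_neg_mul_abs_int {c : ℝ} (hc : 0 < c) :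
    Summable fun x : ℤ => Real.exp (-(c * |(x : ℝ)|)) := by
  have h : Summable fun n : ℕ => Real.exp (n * -c) := Real.summable_exp_nat_mul_iff.2 (by linarith)
  apply Summable.of_nat_of_neg <;> simpa [mul_comm] using h

lemma exists_reProdIm_subset_of_isOpen {Ω : Set ℂ} (hΩ : IsOpen Ω) {a b : ℝ}
    (h : ∀ k ∈ Set.Icc a b, (k : ℂ) ∈ Ω) : ∃ c > 0, Set.Icc a b ×ℂ Set.Icc (-c) c ⊆ Ω := by
  have hK : IsCompact (((↑) : ℝ → ℂ) '' Set.Icc a b) :=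
    isCompact_Icc.image Complex.continuous_ofReal
  obtain ⟨c, hc, hthick⟩ :=
    hK.exists_cthickening_subset_open hΩ (by rintro _ ⟨k, hk, rfl⟩; exact h k hk)
  refine ⟨c, hc, fun z hz => hthick ?_⟩
  rw [Complex.mem_reProdIm] at hz
  refine Metric.mem_cthickening_of_dist_le z z.re c _ ⟨z.re, hz.1, rfl⟩ ?_
  have : z - z.re = z.im * Complex.I := by apply Complex.ext <;> simp
  simpa [Complex.dist_eq, this] using abs_le.2 hz.2

lemma exists_reProdIm_forall_analyticAt_mem {G : ℂ → ℂ} {S : Set ℂ} (hS : IsOpen S)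
    (hG : ∀ k : ℝ, AnalyticAt ℂ G k) (hGS : ∀ k : ℝ, G k ∈ S) :
    ∃ c > 0, ∀ z ∈ Set.Icc (0:ℝ) 1 ×ℂ Set.Icc (-c) c, AnalyticAt ℂ G z ∧ G z ∈ S := by
  have hcont : ContinuousOn G {z | AnalyticAt ℂ G z} := fun z hz =>
    hz.continuousAt.continuousWithinAt
  exact exists_reProdIm_subset_of_isOpen (hcont.isOpen_inter_preimage (isOpen_analyticAt ℂ G) hS)
    fun k _ => ⟨hG k, hGS k⟩

lemma Function.Periodic.intervalIntegral_add_mul_I {F : ℂ → ℂ} (hper : Function.Periodic F 1)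
    {b : ℝ} (hd : DifferentiableOn ℂ F (Set.uIcc 0 1 ×ℂ Set.uIcc 0 b)) :
    ∫ k in (0:ℝ)..1, F (k + b * Complex.I) = ∫ k in (0:ℝ)..1, F k := by
  have hside : ∀ y : ℝ, F (1 + y * Complex.I) = F (y * Complex.I) := fun y => by
    simpa [add_comm] using hper (y * Complex.I)
  have key : (∫ k in (0:ℝ)..1, F k) - ∫ k in (0:ℝ)..1, F (k + b * Complex.I) = 0 := by
    simpa [hside] using
      Complex.integral_boundary_rect_eq_zero_of_differentiableOn F 0 (1 + b * Complex.I)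
        (by simpa using hd)
  exact (sub_eq_zero.1 key).symm

lemma norm_fourierCoeff_le_of_differentiableOn_reProdIm {F : ℂ → ℂ} {c B : ℝ} (hc : 0 ≤ c)
    (hper : Function.Periodic F 1) (hd : DifferentiableOn ℂ F (Set.Icc 0 1 ×ℂ Set.Icc (-c) c))
    (hB : ∀ z ∈ Set.Icc 0 1 ×ℂ Set.Icc (-c) c, ‖F z‖ ≤ B) (x : ℤ) :
    ‖∫ k in (0:ℝ)..1, Complex.exp (((2 * π * (x : ℝ) * k) : ℝ) * Complex.I) * F k‖ ≤
      B * Real.exp (-(2 * π * c * |(x : ℝ)|)) := by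
  set b : ℝ := c * SignType.sign (x : ℝ)
  have hb : b ∈ Set.Icc (-c) c := by
    rcases lt_trichotomy (x : ℝ) 0 with h | h | h <;> simp [b, h, hc]
  set H : ℂ → ℂ := fun z => Complex.exp (2 * π * x * z * Complex.I) * F z
  have hHper : Function.Periodic H 1 := fun z => by
    simp only [H, hper z]
    rw [show 2 * π * x * (z + 1) * Complex.I = 2 * π * x * z * Complex.I + x * (2 * π * Complex.I)
      by ring, Complex.exp_add, Complex.exp_int_mul_two_pi_mul_I, mul_one]
  have hHd : DifferentiableOn ℂ H (Set.uIcc 0 1 ×ℂ Set.uIcc 0 b) :=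
    ((DifferentiableOn.mul (by fun_prop) hd).mono <| Complex.reProdIm_subset_iff'.2 <|
      Or.inl ⟨by simp, Set.uIcc_subset_Icc ⟨by linarith, hc⟩ hb⟩)
  have hHnorm : ∀ k ∈ Set.Icc (0:ℝ) 1,
      ‖H (k + b * Complex.I)‖ ≤ B * Real.exp (-(2 * π * c * |(x : ℝ)|)) := by
    intro k hk
    have hre : (2 * π * x * (k + b * Complex.I) * Complex.I).re = -(2 * π * c * |(x : ℝ)|) := by
      simp [b, ← self_mul_sign (x : ℝ)]
      ring
    rw [norm_mul, Complex.norm_exp, hre, mul_comm]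
    gcongr
    exact hB _ (Complex.mem_reProdIm.2 ⟨by simpa using hk, by simpa using hb⟩)
  calc ‖∫ k in (0:ℝ)..1, Complex.exp (((2 * π * (x : ℝ) * k) : ℝ) * Complex.I) * F k‖
      = ‖∫ k in (0:ℝ)..1, H (k + b * Complex.I)‖ := by
        rw [hHper.intervalIntegral_add_mul_I hHd]; push_cast; rfl
    _ ≤ B * Real.exp (-(2 * π * c * |(x : ℝ)|)) * |1 - 0| :=
        intervalIntegral.norm_integral_le_of_norm_le_const fun k hk =>
          hHnorm k (Set.Ioc_subset_Icc_self (by simpa using hk))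
    _ = _ := by simp

lemma norm_fourierCoeff_comp_le {G f : ℂ → ℂ} {A : ℝ → ℝ} {S : Set ℂ} {c B : ℝ} (hc : 0 ≤ c)
    (hGper : Function.Periodic G 1)
    (hG : ∀ z ∈ Set.Icc (0:ℝ) 1 ×ℂ Set.Icc (-c) c, AnalyticAt ℂ G z ∧ G z ∈ S)
    (hf : ∀ g ∈ S, DifferentiableAt ℂ f g)
    (hB : ∀ z ∈ Set.Icc (0:ℝ) 1 ×ℂ Set.Icc (-c) c, ‖f (G z)‖ ≤ B)
    (hA : ∀ k : ℝ, f (G k) = A k) (x : ℤ) :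
    ‖∫ k in (0:ℝ)..1, Complex.exp (((2 * π * (x : ℝ) * k) : ℝ) * Complex.I) * (A k : ℂ)‖ ≤
      B * Real.exp (-(2 * π * c * |(x : ℝ)|)) := by
  simp_rw [← hA]
  exact norm_fourierCoeff_le_of_differentiableOn_reProdIm hc (hGper.comp f)
    (fun z hz => ((hf _ (hG z hz).2).comp z (hG z hz).1.differentiableAt).differentiableWithinAt)
    hB x

def phiHatC (Φ : ℤ → ℝ) (z : ℂ) : ℂ := ∑' x : ℤ, (Φ x : ℂ) * Complex.cos (2 * π * z * x)

section DecayingInteraction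

variable {Φ : ℤ → ℝ} {C δ : ℝ}

lemma summable_abs_of_abs_le_exp
    (hdec : ∀ x : ℤ, |Φ x| ≤ C * Real.exp (-δ * |(x : ℝ)|)) (hδ : 0 < δ) :
    Summable fun x : ℤ => |Φ x| :=
  ((summable_exp_neg_mul_abs_int hδ).mul_left C).of_nonneg_of_le (fun x => abs_nonneg _)
    fun x => by simpa using hdec x

lemma norm_phiHatC_term_le (hdec : ∀ x : ℤ, |Φ x| ≤ C * Real.exp (-δ * |(x : ℝ)|)) {z : ℂ}
    (hz : |z.im| ≤ δ / (4 * π)) (x : ℤ) :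
    ‖(Φ x : ℂ) * Complex.cos (2 * π * z * x)‖ ≤ C * Real.exp (-(δ / 2 * |(x : ℝ)|)) := by
  have him : |(2 * π * z * x).im| ≤ δ / 2 * |(x : ℝ)| := by
    have : (2 * π * z * x).im = 2 * π * z.im * x := by simp
    rw [this, abs_mul, abs_mul, abs_of_pos (by positivity : (0:ℝ) < 2 * π)]
    gcongr
    calc 2 * π * |z.im| ≤ 2 * π * (δ / (4 * π)) := by gcongr
      _ = δ / 2 := by field_simp; ring
  calc ‖(Φ x : ℂ) * Complex.cos (2 * π * z * x)‖
      ≤ C * Real.exp (-δ * |(x : ℝ)|) * Real.exp (δ / 2 * |(x : ℝ)|) := by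
        rw [norm_mul, Complex.norm_real, Real.norm_eq_abs]
        exact mul_le_mul (hdec x) ((Complex.norm_cos_le_exp_abs_im _).trans (Real.exp_le_exp.2 him))
          (norm_nonneg _) ((abs_nonneg _).trans (hdec x))
    _ = C * Real.exp (-(δ / 2 * |(x : ℝ)|)) := by rw [mul_assoc, ← Real.exp_add]; ring_nf

lemma differentiableOn_phiHatC (hdec : ∀ x : ℤ, |Φ x| ≤ C * Real.exp (-δ * |(x : ℝ)|))
    (hδ : 0 < δ) : DifferentiableOn ℂ (phiHatC Φ) {z : ℂ | |z.im| < δ / (4 * π)} := by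
  refine Complex.differentiableOn_tsum_of_summable_norm
    ((summable_exp_neg_mul_abs_int (half_pos hδ)).mul_left C) (fun x => by fun_prop) ?_
    (fun x z hz => norm_phiHatC_term_le hdec (le_of_lt hz) x)
  exact isOpen_lt (by fun_prop) continuous_const

lemma analyticAt_phiHatC (hdec : ∀ x : ℤ, |Φ x| ≤ C * Real.exp (-δ * |(x : ℝ)|))
    (hδ : 0 < δ) (k : ℝ) : AnalyticAt ℂ (phiHatC Φ) k :=
  (differentiableOn_phiHatC hdec hδ).analyticAt <|
    (isOpen_lt (by fun_prop) continuous_const).mem_nhds (by simp [hδ, Real.pi_pos])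

end DecayingInteraction

lemma phiHat_le_supPhiHat {Φ : ℤ → ℝ} (hsum : Summable fun x : ℤ => |Φ x|) (k : ℝ) :
    phiHat Φ k ≤ supPhiHat Φ := by
  refine le_ciSup ⟨∑' x : ℤ, |Φ x|, ?_⟩ k
  rintro _ ⟨k', rfl⟩
  refine (Real.le_norm_self _).trans (tsum_of_norm_bounded hsum.hasSum fun x => ?_)
  rw [Real.norm_eq_abs, abs_mul]
  exact mul_le_of_le_one_right (abs_nonneg _) (Real.abs_cos_le_one _)

lemma phiHatC_ofReal (Φ : ℤ → ℝ) (k : ℝ) : phiHatC Φ k = phiHat Φ k := by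
  rw [phiHat, phiHatC, Complex.ofReal_tsum]
  push_cast
  rfl

lemma phiHatC_periodic (Φ : ℤ → ℝ) : Function.Periodic (phiHatC Φ) 1 := fun z => by
  simp only [phiHatC, mul_add, add_mul, mul_one]
  congr! 2 with x
  rw [show 2 * π * x = (x : ℂ) * (2 * π) by ring, Complex.cos_add_int_mul_two_pi]

def dampingRoot (γ : ℝ) (g : ℂ) : ℂ := ((γ / 2 : ℂ) ^ 2 - g) ^ (1 / 2 : ℂ)

def oscA1 (γ t : ℝ) (g : ℂ) : ℂ :=
  g * (Complex.exp (-(t * (γ / 2 + dampingRoot γ g))) -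
    Complex.exp (-(t * (γ / 2 - dampingRoot γ g)))) / (2 * dampingRoot γ g)

def oscA2 (γ t : ℝ) (g : ℂ) : ℂ :=
  ((γ / 2 + dampingRoot γ g) * Complex.exp (-(t * (γ / 2 + dampingRoot γ g))) -
    (γ / 2 - dampingRoot γ g) * Complex.exp (-(t * (γ / 2 - dampingRoot γ g)))) /
      (2 * dampingRoot γ g)

def overdampedSet (γ a : ℝ) : Set ℂ :=
  {g | 0 < ((γ / 2 : ℂ) ^ 2 - g).re ∧ a < (γ / 2 - dampingRoot γ g).re ∧
    a < (γ / 2 + dampingRoot γ g).re}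

section Oscillator

variable {γ a t : ℝ}

lemma dampingRoot_ofReal {g : ℝ} (h : g ≤ (γ / 2) ^ 2) :
    dampingRoot γ g = (√((γ / 2) ^ 2 - g) : ℝ) := by
  rw [dampingRoot, Real.sqrt_eq_rpow, Complex.ofReal_cpow (by linarith)]
  push_cast
  rfl

lemma oscA1_phiHat {Φ : ℤ → ℝ} {k : ℝ} (h : phiHat Φ k ≤ (γ / 2) ^ 2) :
    oscA1 γ t (phiHat Φ k) = Ahat1 Φ γ t k := by
  rw [oscA1, Ahat1, muP, muM, uFun, dampingRoot_ofReal h]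
  push_cast
  rfl

lemma oscA2_phiHat {Φ : ℤ → ℝ} {k : ℝ} (h : phiHat Φ k ≤ (γ / 2) ^ 2) :
    oscA2 γ t (phiHat Φ k) = Ahat2 Φ γ t k := by
  rw [oscA2, Ahat2, muP, muM, uFun, dampingRoot_ofReal h]
  push_cast
  rfl

lemma continuousOn_dampingRoot :
    ContinuousOn (dampingRoot γ) {g | 0 < ((γ / 2 : ℂ) ^ 2 - g).re} := fun _ hg =>
  ((continuousAt_const.sub continuousAt_id).cpow continuousAt_const
    (Or.inl hg)).continuousWithinAt

lemma dampingRoot_ne_zero {g : ℂ} (hg : 0 < ((γ / 2 : ℂ) ^ 2 - g).re) : dampingRoot γ g ≠ 0 := by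
  rw [dampingRoot, Ne, Complex.cpow_eq_zero_iff]
  rintro ⟨h, -⟩
  simp [h] at hg

lemma isOpen_overdampedSet (γ a : ℝ) : IsOpen (overdampedSet γ a) := by
  show IsOpen ({g | 0 < ((γ / 2 : ℂ) ^ 2 - g).re} ∩
    dampingRoot γ ⁻¹' {v | a < (γ / 2 - v).re ∧ a < (γ / 2 + v).re})
  exact continuousOn_dampingRoot.isOpen_inter_preimage (isOpen_lt continuous_const (by fun_prop))
    ((isOpen_lt continuous_const (by fun_prop)).and (isOpen_lt continuous_const (by fun_prop)))

lemma ofReal_mem_overdampedSet {g : ℝ} (hγ : 0 < γ) (hg : 0 < g) (hgγ : g < (γ / 2) ^ 2)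
    (ha : a < g / γ) : (g : ℂ) ∈ overdampedSet γ a := by
  have hu := Real.sq_sqrt (by linarith : 0 ≤ (γ / 2) ^ 2 - g)
  set u := √((γ / 2) ^ 2 - g)
  have hu0 : 0 ≤ u := Real.sqrt_nonneg _
  have huγ : u < γ / 2 := by nlinarith
  have hμ : g / γ ≤ γ / 2 - u := by
    rw [div_le_iff₀ hγ]; nlinarith
  have hw : ((γ / 2 : ℂ) ^ 2).re = (γ / 2) ^ 2 := by norm_cast
  refine ⟨?_, ?_, ?_⟩ <;>
    simp only [dampingRoot_ofReal hgγ.le, Complex.sub_re, Complex.add_re,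
      Complex.div_ofNat_re, Complex.ofReal_re, hw] <;>
    linarith

lemma differentiableAt_oscA1 {g : ℂ} (hg : 0 < ((γ / 2 : ℂ) ^ 2 - g).re) :
    DifferentiableAt ℂ (oscA1 γ t) g := by
  have hu : DifferentiableAt ℂ (dampingRoot γ) g :=
    ((differentiableAt_const _).sub differentiableAt_id).cpow (differentiableAt_const _) (Or.inl hg)
  have h2u : 2 * dampingRoot γ g ≠ 0 := mul_ne_zero two_ne_zero (dampingRoot_ne_zero hg)
  unfold oscA1
  fun_prop (disch := exact h2u)

lemma differentiableAt_oscA2 {g : ℂ} (hg : 0 < ((γ / 2 : ℂ) ^ 2 - g).re) :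
    DifferentiableAt ℂ (oscA2 γ t) g := by
  have hu : DifferentiableAt ℂ (dampingRoot γ) g :=
    ((differentiableAt_const _).sub differentiableAt_id).cpow (differentiableAt_const _) (Or.inl hg)
  have h2u : 2 * dampingRoot γ g ≠ 0 := mul_ne_zero two_ne_zero (dampingRoot_ne_zero hg)
  unfold oscA2
  fun_prop (disch := exact h2u)

lemma norm_cexp_neg_mul_le {μ : ℂ} (ht : 0 ≤ t) (hμ : a ≤ μ.re) :
    ‖Complex.exp (-(t * μ))‖ ≤ Real.exp (-(a * t)) := by
  rw [Complex.norm_exp]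
  refine Real.exp_le_exp.2 ?_
  rw [Complex.neg_re, Complex.re_ofReal_mul, neg_le_neg_iff]
  nlinarith

lemma norm_oscA1_le {g : ℂ} (ht : 0 ≤ t) (hg : g ∈ overdampedSet γ a) :
    ‖oscA1 γ t g‖ ≤ ‖g‖ / ‖dampingRoot γ g‖ * Real.exp (-(a * t)) := by
  rw [oscA1, norm_div, norm_mul, norm_mul, Complex.norm_two]
  calc _ ≤ ‖g‖ * (Real.exp (-(a * t)) + Real.exp (-(a * t))) / (2 * ‖dampingRoot γ g‖) := by
        gcongr
        exact (norm_sub_le _ _).trans (add_le_add (norm_cexp_neg_mul_le ht hg.2.2.le)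
          (norm_cexp_neg_mul_le ht hg.2.1.le))
    _ = _ := by ring

lemma norm_oscA2_le {g : ℂ} (ht : 0 ≤ t) (hg : g ∈ overdampedSet γ a) :
    ‖oscA2 γ t g‖ ≤ (‖γ / 2 + dampingRoot γ g‖ + ‖γ / 2 - dampingRoot γ g‖) /
      (2 * ‖dampingRoot γ g‖) * Real.exp (-(a * t)) := by
  rw [oscA2, norm_div, norm_mul, Complex.norm_two]
  calc _ ≤ (‖γ / 2 + dampingRoot γ g‖ * Real.exp (-(a * t)) +
        ‖γ / 2 - dampingRoot γ g‖ * Real.exp (-(a * t))) / (2 * ‖dampingRoot γ g‖) := by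
        gcongr
        refine (norm_sub_le _ _).trans (add_le_add ?_ ?_) <;> rw [norm_mul] <;> gcongr
        exacts [norm_cexp_neg_mul_le ht hg.2.2.le, norm_cexp_neg_mul_le ht hg.2.1.le]
    _ = _ := by ring

lemma IsCompact.exists_bound_oscA {K : Set ℂ} (hK : IsCompact K) (hKS : K ⊆ overdampedSet γ a) :
    ∃ B, ∀ t ≥ 0, ∀ g ∈ K,
      ‖oscA1 γ t g‖ ≤ B * Real.exp (-(a * t)) ∧ ‖oscA2 γ t g‖ ≤ B * Real.exp (-(a * t)) := by
  have hu : ContinuousOn (dampingRoot γ) K := continuousOn_dampingRoot.mono fun g hg => (hKS hg).1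
  have hu0 : ∀ g ∈ K, ‖dampingRoot γ g‖ ≠ 0 := fun g hg =>
    norm_ne_zero_iff.2 (dampingRoot_ne_zero (hKS hg).1)
  obtain ⟨B₁, hB₁⟩ := hK.exists_bound_of_continuousOn
    (f := fun g => ‖g‖ / ‖dampingRoot γ g‖) (by fun_prop (disch := assumption))
  obtain ⟨B₂, hB₂⟩ := hK.exists_bound_of_continuousOn
    (f := fun g => (‖γ / 2 + dampingRoot γ g‖ + ‖γ / 2 - dampingRoot γ g‖) /
      (2 * ‖dampingRoot γ g‖))
    (by fun_prop (disch := exact fun g hg => mul_ne_zero two_ne_zero (hu0 g hg)))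
  refine ⟨max B₁ B₂, fun t ht g hg => ⟨?_, ?_⟩⟩
  · refine (norm_oscA1_le ht (hKS hg)).trans ?_
    gcongr
    exact (Real.le_norm_self _).trans ((hB₁ g hg).trans (le_max_left _ _))
  · refine (norm_oscA2_le ht (hKS hg)).trans ?_
    gcongr
    exact (Real.le_norm_self _).trans ((hB₂ g hg).trans (le_max_right _ _))

end Oscillator

/-- exponential decay of the Fourier coefficients `Ã^i_{t,x}`
(Lemma 4.4, item 4). -/
theorem stmt5 (Φ : ℤ → ℝ) (ω₀ γ : ℝ) (hA1 : AssumptionA1 Φ ω₀) (hγ : 0 < γ)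
    (hdom : 4 * supPhiHat Φ < γ ^ 2) :
    ∃ c₂ > (0:ℝ), ∃ γ₂ > (0:ℝ), ∀ t ≥ (0:ℝ), ∀ x : ℤ,
      ‖∫ k in (0:ℝ)..1,
          Complex.exp (((2 * π * (x : ℝ) * k) : ℝ) * Complex.I) * (Ahat1 Φ γ t k : ℂ)‖ ≤
        c₂ * Real.exp (-(ω₀ ^ 2 / γ) * t / 2 - γ₂ * |(x : ℝ)|) ∧
      ‖∫ k in (0:ℝ)..1,
          Complex.exp (((2 * π * (x : ℝ) * k) : ℝ) * Complex.I) * (Ahat2 Φ γ t k : ℂ)‖ ≤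
        c₂ * Real.exp (-(ω₀ ^ 2 / γ) * t / 2 - γ₂ * |(x : ℝ)|) := by
  obtain ⟨⟨C, -, δ, hδ, hdec⟩, -, hω₀, hpin⟩ := hA1
  have hφ : ∀ k : ℝ, phiHat Φ k < (γ / 2) ^ 2 := fun k => by
    linarith [phiHat_le_supPhiHat (summable_abs_of_abs_le_exp hdec hδ) k]
  have hreal : ∀ k : ℝ, phiHatC Φ k ∈ overdampedSet γ (ω₀ ^ 2 / γ / 2) := fun k => by
    have hpos : 0 < phiHat Φ k := (pow_pos hω₀ 2).trans_le (hpin k)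
    rw [phiHatC_ofReal]
    refine ofReal_mem_overdampedSet hγ hpos (hφ k) ?_
    calc ω₀ ^ 2 / γ / 2 < ω₀ ^ 2 / γ := half_lt_self (by positivity)
      _ ≤ phiHat Φ k / γ := by gcongr; exact hpin k
  obtain ⟨c, hc, hR⟩ := exists_reProdIm_forall_analyticAt_mem (isOpen_overdampedSet γ _)
    (analyticAt_phiHatC hdec hδ) hreal
  have hK : IsCompact (phiHatC Φ '' (Set.Icc (0:ℝ) 1 ×ℂ Set.Icc (-c) c)) :=
    (isCompact_Icc.reProdIm isCompact_Icc).image_of_continuousOn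
      fun z hz => (hR z hz).1.continuousAt.continuousWithinAt
  obtain ⟨B, hB⟩ := hK.exists_bound_oscA (by rintro _ ⟨z, hz, rfl⟩; exact (hR z hz).2)
  have hrate : ∀ t : ℝ, ∀ x : ℤ,
      B * Real.exp (-(ω₀ ^ 2 / γ / 2 * t)) * Real.exp (-(2 * π * c * |(x : ℝ)|)) ≤
        max B 1 * Real.exp (-(ω₀ ^ 2 / γ) * t / 2 - 2 * π * c * |(x : ℝ)|) := fun t x => by
    rw [mul_assoc, ← Real.exp_add, show -(ω₀ ^ 2 / γ / 2 * t) + -(2 * π * c * |(x : ℝ)|) =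
      -(ω₀ ^ 2 / γ) * t / 2 - 2 * π * c * |(x : ℝ)| by ring]
    gcongr
    exact le_max_left _ _
  refine ⟨max B 1, by positivity, 2 * π * c, by positivity, fun t ht x => ⟨?_, ?_⟩⟩
  · exact (norm_fourierCoeff_comp_le hc.le (phiHatC_periodic Φ) hR
      (fun g hg => differentiableAt_oscA1 hg.1) (fun z hz => (hB t ht _ ⟨z, hz, rfl⟩).1)
      (fun k => by rw [phiHatC_ofReal, oscA1_phiHat (hφ k).le]) x).trans (hrate t x)
  · exact (norm_fourierCoeff_comp_le hc.le (phiHatC_periodic Φ) hR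
      (fun g hg => differentiableAt_oscA2 hg.1) (fun z hz => (hB t ht _ ⟨z, hz, rfl⟩).2)
      (fun k => by rw [phiHatC_ofReal, oscA2_phiHat (hφ k).le]) x).trans (hrate t x)
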